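/- Let Γ ⊆ ℝⁿ be an n-attractor. Then Γ equals the closure of its interior, Γ = cl(int Γ); consequently ∂Γ = ∂(int Γ) = ∂(Γᶜ). Moreover the Hausdorff dimension of ∂Γ satisfies dim_H(∂Γ) ≥ n − 1. -/

import Mathlib

/-!
Let `H A = ⋃ᵢ sᵢ(A)` be the Hutchinson operator and `O` the set of the open set condition. As the
pieces `sᵢ(O)` are disjoint and `∑ ρᵢⁿ = 1`, every iterate `Hᵏ O ⊆ O` has the full volume of `O`;
on the other hand `Hᵏ O` lies within `C rᵏ` of `Hᵏ Γ = Γ`, where `r = maxᵢ ρᵢ < 1`. So the open set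
`O \ Γ` is null, i.e. `O ⊆ int Γ`, while symmetrically `Γ = Hᵏ Γ` lies within `C rᵏ` of `Hᵏ O ⊆ O`,
so `Γ ⊆ cl O ⊆ cl (int Γ)`.

For the dimension bound fix a direction `v`: a line parallel to `v` that meets the compact set `Γ`
leaves it through `∂Γ`, so the orthogonal projection along `v` maps `∂Γ` onto the projection of
`Γ`, which has nonempty interior in the hyperplane `v⊥`. Projections do not increase `dim_H`.
-/

open Function Metric MeasureTheory Set Filter Topology Module
open scoped ENNReal Pointwise

def hutchinson {ι X : Type*} (s : ι → X → X) (A : Set X) : Set X := ⋃ i, s i '' A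

section Hutchinson

variable {ι X : Type*} {s : ι → X → X}

@[simp]
theorem mem_hutchinson {A : Set X} {x : X} :
    x ∈ hutchinson s A ↔ ∃ i, ∃ a ∈ A, s i a = x := by
  simp [hutchinson]

theorem hutchinson_mono : Monotone (hutchinson s) :=
  fun _ _ h => iUnion_mono fun _ => image_mono h

theorem hutchinson_iterate_subset {O : Set X} (hO : hutchinson s O ⊆ O) (k : ℕ) :
    (hutchinson s)^[k] O ⊆ O := by
  induction k with
  | zero => rfl
  | succ k ih => rw [iterate_succ_apply']; exact (hutchinson_mono ih).trans hO

theorem measurableSet_hutchinson_iterate [Countable ι] [MeasurableSpace X]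
    (hs : ∀ i, MeasurableEmbedding (s i)) {A : Set X} (hA : MeasurableSet A) (k : ℕ) :
    MeasurableSet ((hutchinson s)^[k] A) := by
  induction k with
  | zero => exact hA
  | succ k ih =>
    rw [iterate_succ_apply']
    exact .iUnion fun i => (hs i).measurableSet_image.2 ih

theorem exists_forall_le_of_lt_one [Finite ι] {ρ : ι → ℝ} (hρ : ∀ i, ρ i < 1) :
    ∃ r, 0 ≤ r ∧ r < 1 ∧ ∀ i, ρ i ≤ r := by
  cases isEmpty_or_nonempty ι
  · exact ⟨0, le_rfl, one_pos, isEmptyElim⟩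
  obtain ⟨j, hj⟩ := Finite.exists_max ρ
  exact ⟨max (ρ j) 0, le_max_right _ _, max_lt (hρ j) one_pos,
    fun i => (hj i).trans (le_max_left _ _)⟩

variable [PseudoMetricSpace X]

theorem exists_dist_le_of_mem_hutchinson_iterate {r : ℝ} (hr : 0 ≤ r)
    (hs : ∀ i x y, dist (s i x) (s i y) ≤ r * dist x y) {A B : Set X} {d : ℝ}
    (hAB : ∀ x ∈ A, ∃ y ∈ B, dist x y ≤ d) (k : ℕ) :
    ∀ x ∈ (hutchinson s)^[k] A, ∃ y ∈ (hutchinson s)^[k] B, dist x y ≤ r ^ k * d := by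
  induction k with
  | zero => simpa using hAB
  | succ k ih =>
    simp only [iterate_succ_apply', mem_hutchinson]
    rintro _ ⟨i, x, hx, rfl⟩
    obtain ⟨y, hy, hxy⟩ := ih x hx
    refine ⟨s i y, ⟨i, y, hy, rfl⟩, ?_⟩
    calc dist (s i x) (s i y) ≤ r * dist x y := hs i x y
      _ ≤ r * (r ^ k * d) := by gcongr
      _ = r ^ (k + 1) * d := by ring

theorem mem_closure_of_forall_mem_hutchinson_iterate [Finite ι] {ρ : ι → ℝ}
    (hρ : ∀ i, ρ i < 1) (hs : ∀ i x y, dist (s i x) (s i y) ≤ ρ i * dist x y)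
    {A B C : Set X} (hA : Bornology.IsBounded A) (hB : B.Nonempty)
    (hBC : ∀ k, (hutchinson s)^[k] B ⊆ C) {x : X} (hx : ∀ k, x ∈ (hutchinson s)^[k] A) :
    x ∈ closure C := by
  obtain ⟨r, hr₀, hr₁, hρr⟩ := exists_forall_le_of_lt_one hρ
  have hr : ∀ i x y, dist (s i x) (s i y) ≤ r * dist x y :=
    fun i x y => (hs i x y).trans (by gcongr; exact hρr i)
  obtain ⟨b, hb⟩ := hB
  obtain ⟨d, hd⟩ := hA.subset_closedBall b
  have hlim : Tendsto (fun k => r ^ k * d) atTop (𝓝 0) := by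
    simpa using (tendsto_pow_atTop_nhds_zero_of_lt_one hr₀ hr₁).mul_const d
  refine Metric.mem_closure_iff.2 fun ε hε => ?_
  obtain ⟨k, hk⟩ := (hlim.eventually (gt_mem_nhds hε)).exists
  obtain ⟨y, hy, hxy⟩ := exists_dist_le_of_mem_hutchinson_iterate hr₀ hr
    (fun a ha => ⟨b, hb, hd ha⟩) k x (hx k)
  exact ⟨y, hBC k hy, hxy.trans_lt hk⟩

end Hutchinson

section Similarity

variable {r : ℝ}

theorem measurableEmbedding_of_dist_eq_mul {X Y : Type*} [MetricSpace X] [MetricSpace Y]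
    [PolishSpace X] [MeasurableSpace X] [BorelSpace X] [MeasurableSpace Y] [BorelSpace Y]
    {f : X → Y} (hr : 0 < r) (hf : ∀ x y, dist (f x) (f y) = r * dist x y) :
    MeasurableEmbedding f :=
  (LipschitzWith.of_dist_le' fun x y => (hf x y).le).continuous.measurableEmbedding
    fun x y h => dist_eq_zero.1 <|
      (mul_eq_zero.1 (by rw [← hf, h, dist_self])).resolve_left hr.ne'

theorem euclideanHausdorffMeasure_image_of_dist_eq_mul {E : Type*} [NormedAddCommGroup E]
    [NormedSpace ℝ E] [MeasurableSpace E] [BorelSpace E] (d : ℕ) {f : E → E} (hr : 0 < r)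
    (hf : ∀ x y, dist (f x) (f y) = r * dist x y) (A : Set E) :
    μHE[d] (f '' A) = ENNReal.ofReal (r ^ d) * μHE[d] A := by
  have hg : Isometry fun x => r⁻¹ • f x := Isometry.of_dist_eq fun x y => by
    rw [dist_smul₀, hf, Real.norm_of_nonneg (inv_nonneg.2 hr.le), inv_mul_cancel_left₀ hr.ne']
  have hfA : f '' A = r • ((fun x => r⁻¹ • f x) '' A) := by
    rw [← image_smul, image_image]
    simp [smul_smul, mul_inv_cancel₀ hr.ne']
  rw [hfA, Measure.euclideanHausdorffMeasure_smul₀ d hr.ne', hg.euclideanHausdorffMeasure_image,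
    ENNReal.smul_def, smul_eq_mul, ENNReal.ofReal_pow hr.le]
  congr
  ext
  simp [hr.le]

end Similarity

section OpenSetCondition

variable {ι E : Type*} [Fintype ι] [NormedAddCommGroup E] [InnerProductSpace ℝ E]
  [FiniteDimensional ℝ E] [MeasurableSpace E] [BorelSpace E] {s : ι → E → E} {ρ : ι → ℝ}

theorem volume_hutchinson (hρ : ∀ i, 0 < ρ i)
    (hs : ∀ i x y, dist (s i x) (s i y) = ρ i * dist x y) (hsum : ∑ i, ρ i ^ finrank ℝ E = 1)
    {U : Set E} (hU : MeasurableSet U) (hdisj : Pairwise (Disjoint on fun i => s i '' U)) :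
    volume (hutchinson s U) = volume U := by
  have hmeas : ∀ i, MeasurableSet (s i '' U) := fun i =>
    (measurableEmbedding_of_dist_eq_mul (hρ i) (hs i)).measurableSet_image.2 hU
  rw [← InnerProductSpace.euclideanHausdorffMeasure_eq_volume, hutchinson,
    measure_iUnion hdisj hmeas, tsum_fintype]
  simp_rw [euclideanHausdorffMeasure_image_of_dist_eq_mul _ (hρ _) (hs _)]
  rw [← Finset.sum_mul, ← ENNReal.ofReal_sum_of_nonneg fun i _ => pow_nonneg (hρ i).le _, hsum,
    ENNReal.ofReal_one, one_mul]

theorem volume_hutchinson_iterate (hρ : ∀ i, 0 < ρ i)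
    (hs : ∀ i x y, dist (s i x) (s i y) = ρ i * dist x y) (hsum : ∑ i, ρ i ^ finrank ℝ E = 1)
    {O : Set E} (hO : MeasurableSet O) (hOsub : hutchinson s O ⊆ O)
    (hdisj : Pairwise (Disjoint on fun i => s i '' O)) (k : ℕ) :
    volume ((hutchinson s)^[k] O) = volume O := by
  induction k with
  | zero => rfl
  | succ k ih =>
    have hsub := hutchinson_iterate_subset hOsub k
    have hmeas := measurableSet_hutchinson_iterate
      (fun i => measurableEmbedding_of_dist_eq_mul (hρ i) (hs i)) hO k
    rw [iterate_succ_apply', volume_hutchinson hρ hs hsum hmeas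
      fun i j hij => (hdisj hij).mono (image_mono hsub) (image_mono hsub), ih]

theorem subset_attractor_of_openSetCondition (hρ : ∀ i, ρ i ∈ Ioo 0 1)
    (hs : ∀ i x y, dist (s i x) (s i y) = ρ i * dist x y) (hsum : ∑ i, ρ i ^ finrank ℝ E = 1)
    {Γ : Set E} (hΓne : Γ.Nonempty) (hΓ : IsClosed Γ) (hattr : hutchinson s Γ = Γ)
    {O : Set E} (hOopen : IsOpen O) (hObdd : Bornology.IsBounded O)
    (hOsub : hutchinson s O ⊆ O) (hdisj : Pairwise (Disjoint on fun i => s i '' O)) :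
    O ⊆ Γ := by
  have hmeas : ∀ i, MeasurableEmbedding (s i) :=
    fun i => measurableEmbedding_of_dist_eq_mul (hρ i).1 (hs i)
  have hnull : ∀ k, volume (O \ (hutchinson s)^[k] O) = 0 := fun k => by
    have hsub := hutchinson_iterate_subset hOsub k
    rw [measure_sdiff hsub
      (measurableSet_hutchinson_iterate hmeas hOopen.measurableSet k).nullMeasurableSet
      (hObdd.subset hsub).measure_lt_top.ne,
      volume_hutchinson_iterate (fun i => (hρ i).1) hs hsum hOopen.measurableSet hOsub hdisj,
      tsub_self]
  have hcover : O \ Γ ⊆ ⋃ k, O \ (hutchinson s)^[k] O := by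
    rintro x ⟨hxO, hxΓ⟩
    obtain ⟨k, hk⟩ : ∃ k, x ∉ (hutchinson s)^[k] O := by
      by_contra! h
      exact hxΓ <| hΓ.closure_subset <| mem_closure_of_forall_mem_hutchinson_iterate
        (fun i => (hρ i).2) (fun i x y => (hs i x y).le) hObdd hΓne
        (fun k => (iterate_fixed hattr k).subset) h
    exact mem_iUnion.2 ⟨k, hxO, hk⟩
  have hOΓ : volume (O \ Γ) = 0 := measure_mono_null hcover (measure_iUnion_null hnull)
  exact sdiff_eq_empty.1 (((hOopen.sdiff hΓ).measure_eq_zero_iff volume).1 hOΓ)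

theorem attractor_eq_closure_interior (hρ : ∀ i, ρ i ∈ Ioo 0 1)
    (hs : ∀ i x y, dist (s i x) (s i y) = ρ i * dist x y) (hsum : ∑ i, ρ i ^ finrank ℝ E = 1)
    {Γ : Set E} (hΓne : Γ.Nonempty) (hΓ : IsCompact Γ) (hattr : hutchinson s Γ = Γ)
    {O : Set E} (hOne : O.Nonempty) (hOopen : IsOpen O) (hObdd : Bornology.IsBounded O)
    (hOsub : hutchinson s O ⊆ O) (hdisj : Pairwise (Disjoint on fun i => s i '' O)) :
    Γ = closure (interior Γ) := by
  have hOΓ : O ⊆ interior Γ := interior_maximal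
    (subset_attractor_of_openSetCondition hρ hs hsum hΓne hΓ.isClosed hattr hOopen hObdd hOsub
      hdisj) hOopen
  have hΓO : Γ ⊆ closure O := fun x hx =>
    mem_closure_of_forall_mem_hutchinson_iterate (fun i => (hρ i).2) (fun i x y => (hs i x y).le)
      hΓ.isBounded hOne (hutchinson_iterate_subset hOsub) fun k => (iterate_fixed hattr k).symm ▸ hx
  exact (hΓO.trans (closure_mono hOΓ)).antisymm (closure_minimal interior_subset hΓ.isClosed)

end OpenSetCondition

section Frontier

variable {E : Type*} [NormedAddCommGroup E]

theorem image_subset_image_frontier_of_map_eq_zero [NormedSpace ℝ E] {F : Type*}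
    [AddCommGroup F] [Module ℝ F] {K : Set E} (hK : IsCompact K) (P : E →ₗ[ℝ] F) {v : E}
    (hv : v ≠ 0) (hPv : P v = 0) :
    P '' K ⊆ P '' frontier K := by
  rintro _ ⟨x, hxK, rfl⟩
  let line : ℝ → E := fun t => x + t • v
  have hline : IsClosedEmbedding line :=
    (Homeomorph.addLeft x).isClosedEmbedding.comp (isClosedEmbedding_smul_left hv)
  obtain ⟨t₀, ht₀K, ht₀max⟩ :=
    (hline.isCompact_preimage hK).exists_isGreatest ⟨0, by simpa [line] using hxK⟩
  refine ⟨line t₀, ⟨subset_closure ht₀K, fun hint => ?_⟩, by simp [line, hPv]⟩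
  have hnear : ∀ᶠ t in 𝓝[>] t₀, line t ∈ interior K := nhdsWithin_le_nhds
    (hline.continuous.continuousAt.eventually_mem (isOpen_interior.mem_nhds hint))
  obtain ⟨t, htK, ht⟩ := (hnear.and self_mem_nhdsWithin).exists
  exact (ht₀max (interior_subset (s := K) htK)).not_gt ht

theorem finrank_sub_one_le_dimH_frontier [InnerProductSpace ℝ E] [FiniteDimensional ℝ E]
    {K : Set E} (hK : IsCompact K) (hKint : (interior K).Nonempty) :
    (finrank ℝ E : ℝ≥0∞) - 1 ≤ dimH (frontier K) := by
  rcases (finrank ℝ E).eq_zero_or_pos with h | h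
  · simp [h]
  have : Nontrivial E := Module.nontrivial_of_finrank_pos h
  obtain ⟨v, hv⟩ := exists_ne (0 : E)
  let W := (ℝ ∙ v)ᗮ
  let P := W.orthogonalProjectionOnto
  have hW : finrank ℝ W = finrank ℝ E - 1 := by
    have := (ℝ ∙ v).finrank_add_finrank_orthogonal
    rw [finrank_span_singleton hv] at this
    change 1 + finrank ℝ W = _ at this
    omega
  have hP : Surjective P := fun w => ⟨w, W.orthogonalProjectionOnto_mem_subspace_eq_self w⟩
  have hPv : P v = 0 := Submodule.orthogonalProjectionOnto_orthogonalComplement_singleton_eq_zero v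
  have hPK : (interior (P '' K)).Nonempty := (hKint.image P).mono <|
    interior_maximal (image_mono interior_subset) (P.isOpenMap hP _ isOpen_interior)
  calc (finrank ℝ E : ℝ≥0∞) - 1 = dimH (P '' K) := by
        rw [Real.dimH_of_nonempty_interior hPK, hW, ENNReal.natCast_sub, Nat.cast_one]
    _ ≤ dimH (P '' frontier K) :=
        dimH_mono (image_subset_image_frontier_of_map_eq_zero hK P.toLinearMap hv hPv)
    _ ≤ dimH (frontier K) := P.lipschitz.dimH_image_le _

end Frontier

theorem statement3_general
    (n : ℕ)
    (M : ℕ)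
    (s : Fin M → EuclideanSpace ℝ (Fin n) → EuclideanSpace ℝ (Fin n))
    (ρ : Fin M → ℝ)
    (hρ : ∀ m, ρ m ∈ Set.Ioo (0 : ℝ) 1)
    (hsim : ∀ m x y, dist (s m x) (s m y) = ρ m * dist x y)
    (Γ : Set (EuclideanSpace ℝ (Fin n)))
    (hΓne : Γ.Nonempty) (hΓcomp : IsCompact Γ)
    (hattr : Γ = ⋃ m, s m '' Γ)
    (hOSC : ∃ O : Set (EuclideanSpace ℝ (Fin n)), O.Nonempty ∧ IsOpen O ∧
      Bornology.IsBounded O ∧ (⋃ m, s m '' O) ⊆ O ∧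
      ∀ m m', m ≠ m' → Disjoint (s m '' O) (s m' '' O))
    (hsum : ∑ m, ρ m ^ n = 1) :
    Γ = closure (interior Γ) ∧
    frontier Γ = frontier (interior Γ) ∧
    frontier Γ = frontier Γᶜ ∧
    (n : ℝ≥0∞) - 1 ≤ dimH (frontier Γ) := by
  obtain ⟨O, hOne, hOopen, hObdd, hOsub, hdisj⟩ := hOSC
  have hΓ : Γ = closure (interior Γ) :=
    attractor_eq_closure_interior hρ hsim (by simpa using hsum) hΓne hΓcomp hattr.symm hOne
      hOopen hObdd hOsub hdisj
  have hint : (interior Γ).Nonempty := closure_nonempty_iff.1 (hΓ ▸ hΓne)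
  refine ⟨hΓ, ?_, (frontier_compl Γ).symm, ?_⟩
  · rw [hΓcomp.isClosed.frontier_eq, frontier, interior_interior, ← hΓ]
  · simpa using finrank_sub_one_le_dimH_frontier hΓcomp hint

/-- If Γ is an n-attractor then Γ = cl(int Γ), hence
∂Γ = ∂(int Γ) = ∂(Γᶜ), and dim_H(∂Γ) ≥ n − 1. -/
theorem statement3
    (n : ℕ) (hn : 1 ≤ n)
    (M : ℕ) (hM : 2 ≤ M)
    (s : Fin M → EuclideanSpace ℝ (Fin n) → EuclideanSpace ℝ (Fin n))
    (ρ : Fin M → ℝ)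
    (hρ : ∀ m, ρ m ∈ Set.Ioo (0 : ℝ) 1)
    (hsim : ∀ m x y, dist (s m x) (s m y) = ρ m * dist x y)
    (Γ : Set (EuclideanSpace ℝ (Fin n)))
    (hΓne : Γ.Nonempty) (hΓcomp : IsCompact Γ)
    (hattr : Γ = ⋃ m, s m '' Γ)
    (hOSC : ∃ O : Set (EuclideanSpace ℝ (Fin n)), O.Nonempty ∧ IsOpen O ∧
      Bornology.IsBounded O ∧ (⋃ m, s m '' O) ⊆ O ∧
      ∀ m m', m ≠ m' → Disjoint (s m '' O) (s m' '' O))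
    (hsum : ∑ m, ρ m ^ n = 1) :
    Γ = closure (interior Γ) ∧
    frontier Γ = frontier (interior Γ) ∧
    frontier Γ = frontier Γᶜ ∧
    (n : ℝ≥0∞) - 1 ≤ dimH (frontier Γ) :=
  statement3_general n M s ρ hρ hsim Γ hΓne hΓcomp hattr hOSC hsum
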